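/- arXiv:1409.4990 — 9 statements merged into one kernel-verified Lean document; each statement's English description precedes it below -/
import Mathlib

section
/- Let H be an inner product space over ℂ, n ≥ 1, x₁,…,xₙ, y₁,…,yₙ ∈ H, p a probability vector, and a, b ∈ H. Then |∑ᵢ pᵢ⟨xᵢ, yᵢ⟩ − ⟨∑ᵢ pᵢ xᵢ, ∑ᵢ pᵢ yᵢ⟩|² ≤ (∑ᵢ pᵢ‖xᵢ − a‖² − ‖∑ᵢ pᵢ xᵢ − a‖²) · (∑ᵢ pᵢ‖yᵢ − b‖² − ‖∑ᵢ pᵢ yᵢ − b‖²). -/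
open scoped InnerProductSpace
open Finset

/-!
Centering at the weighted means `x̄ = ∑ pᵢ xᵢ`, `ȳ = ∑ pᵢ yᵢ` rewrites the Grüss form as the
weighted sum `∑ pᵢ ⟪xᵢ - x̄, yᵢ - ȳ⟫`; as `∑ pᵢ = 1`, translating all `xᵢ` by `a` moves `x̄` by `a`
as well, so each factor on the right is `∑ pᵢ ‖xᵢ - x̄‖²`. The inequality is then the
Cauchy–Schwarz inequality for weighted sums of inner products.
-/

section WeightedMean

variable {ι : Type*} [Fintype ι]

theorem sum_smul_sub_const_of_sum_eq_one {R M : Type*} [Ring R] [AddCommGroup M] [Module R M]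
    {w : ι → R} (hw : ∑ i, w i = 1) (x : ι → M) (a : M) :
    ∑ i, w i • (x i - a) = ∑ i, w i • x i - a := by
  simp only [smul_sub, sum_sub_distrib, ← sum_smul, hw, one_smul]

variable {𝕜 E : Type*} [RCLike 𝕜] [NormedAddCommGroup E] [InnerProductSpace 𝕜 E]

theorem sum_inner_sub_inner_sum_eq_sum_inner_sub_mean {p : ι → ℝ} (hp : ∑ i, p i = 1)
    (x y : ι → E) :
    ∑ i, (p i : 𝕜) * ⟪x i, y i⟫_𝕜 - ⟪∑ i, (p i : 𝕜) • x i, ∑ i, (p i : 𝕜) • y i⟫_𝕜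
      = ∑ i, (p i : 𝕜) * ⟪x i - ∑ j, (p j : 𝕜) • x j, y i - ∑ j, (p j : 𝕜) • y j⟫_𝕜 := by
  set x₀ := ∑ j, (p j : 𝕜) • x j
  set y₀ := ∑ j, (p j : 𝕜) • y j
  have hp𝕜 : ∑ i, (p i : 𝕜) = 1 := by exact_mod_cast hp
  have hx : ∑ i, (p i : 𝕜) * ⟪x i, y₀⟫_𝕜 = ⟪x₀, y₀⟫_𝕜 := by
    simp only [x₀, sum_inner, inner_smul_left, RCLike.conj_ofReal]
  have hy : ∑ i, (p i : 𝕜) * ⟪x₀, y i⟫_𝕜 = ⟪x₀, y₀⟫_𝕜 := by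
    simp only [y₀, inner_sum, inner_smul_right]
  have hc : ∑ i, (p i : 𝕜) * ⟪x₀, y₀⟫_𝕜 = ⟪x₀, y₀⟫_𝕜 := by
    rw [← sum_mul, hp𝕜, one_mul]
  simp only [inner_sub_left, inner_sub_right, mul_sub, sum_sub_distrib, hx, hy, hc]
  ring

theorem sum_mul_norm_sub_sq_sub_norm_mean_sub_sq {p : ι → ℝ} (hp : ∑ i, p i = 1)
    (x : ι → E) (a : E) :
    ∑ i, p i * ‖x i - a‖ ^ 2 - ‖∑ i, (p i : 𝕜) • x i - a‖ ^ 2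
      = ∑ i, p i * ‖x i - ∑ j, (p j : 𝕜) • x j‖ ^ 2 := by
  have hp𝕜 : ∑ i, (p i : 𝕜) = 1 := by exact_mod_cast hp
  have h := sum_inner_sub_inner_sum_eq_sum_inner_sub_mean (𝕜 := 𝕜) hp
    (fun i ↦ x i - a) (fun i ↦ x i - a)
  simp only [inner_self_eq_norm_sq_to_K, sum_smul_sub_const_of_sum_eq_one hp𝕜,
    sub_sub_sub_cancel_right] at h
  exact_mod_cast h

theorem norm_sum_mul_inner_sq_le {p : ι → ℝ} (hp : ∀ i, 0 ≤ p i) (u v : ι → E) :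
    ‖∑ i, (p i : 𝕜) * ⟪u i, v i⟫_𝕜‖ ^ 2
      ≤ (∑ i, p i * ‖u i‖ ^ 2) * ∑ i, p i * ‖v i‖ ^ 2 := by
  calc ‖∑ i, (p i : 𝕜) * ⟪u i, v i⟫_𝕜‖ ^ 2 ≤ (∑ i, p i * (‖u i‖ * ‖v i‖)) ^ 2 := by
        gcongr
        refine (norm_sum_le _ _).trans (sum_le_sum fun i _ ↦ ?_)
        rw [norm_mul, RCLike.norm_ofReal, abs_of_nonneg (hp i)]
        exact mul_le_mul_of_nonneg_left (norm_inner_le_norm _ _) (hp i)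
    _ ≤ _ := sum_sq_le_sum_mul_sum_of_sq_le_mul _
        (fun i _ ↦ mul_nonneg (hp i) (sq_nonneg _)) (fun i _ ↦ mul_nonneg (hp i) (sq_nonneg _))
        (fun i _ ↦ (by ring : _ = _).le)

end WeightedMean

theorem gruss_cauchy_schwarz_general {H : Type*} [NormedAddCommGroup H] [InnerProductSpace ℂ H]
    (n : ℕ) (x y : Fin n → H) (p : Fin n → ℝ)
    (hp : ∀ i, 0 ≤ p i) (hsum : ∑ i, p i = 1) (a b : H) :
    ‖∑ i, (p i : ℂ) * ⟪x i, y i⟫_ℂ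
        - ⟪∑ i, (p i : ℂ) • x i, ∑ i, (p i : ℂ) • y i⟫_ℂ‖ ^ 2
      ≤ (∑ i, p i * ‖x i - a‖ ^ 2 - ‖(∑ i, (p i : ℂ) • x i) - a‖ ^ 2)
        * (∑ i, p i * ‖y i - b‖ ^ 2 - ‖(∑ i, (p i : ℂ) • y i) - b‖ ^ 2) := by
  -- the statement casts with `Complex.ofReal`, the lemmas with the `RCLike` coercion
  rw [← RCLike.ofReal_eq_complex_ofReal, sum_inner_sub_inner_sum_eq_sum_inner_sub_mean hsum,
    sum_mul_norm_sub_sq_sub_norm_mean_sub_sq hsum, sum_mul_norm_sub_sq_sub_norm_mean_sub_sq hsum]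
  exact norm_sum_mul_inner_sq_le hp _ _

theorem gruss_cauchy_schwarz {H : Type*} [NormedAddCommGroup H] [InnerProductSpace ℂ H]
    (n : ℕ) (hn : 1 ≤ n) (x y : Fin n → H) (p : Fin n → ℝ)
    (hp : ∀ i, 0 ≤ p i) (hsum : ∑ i, p i = 1) (a b : H) :
    ‖∑ i, (p i : ℂ) * ⟪x i, y i⟫_ℂ
        - ⟪∑ i, (p i : ℂ) • x i, ∑ i, (p i : ℂ) • y i⟫_ℂ‖ ^ 2
      ≤ (∑ i, p i * ‖x i - a‖ ^ 2 - ‖(∑ i, (p i : ℂ) • x i) - a‖ ^ 2)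
        * (∑ i, p i * ‖y i - b‖ ^ 2 - ‖(∑ i, (p i : ℂ) • y i) - b‖ ^ 2) :=
  gruss_cauchy_schwarz_general n x y p hp hsum a b
end

section
/- Let H be a normed space over ℂ, n ≥ 1, x₁,…,xₙ ∈ H, α₁,…,αₙ ∈ ℂ, p a probability vector, a ∈ H, r ≥ 0. If ‖xᵢ − a‖ ≤ r for all i, then ‖∑ᵢ pᵢ αᵢ xᵢ − (∑ᵢ pᵢ αᵢ)(∑ᵢ pᵢ xᵢ)‖ ≤ r · ∑ᵢ pᵢ |αᵢ − ∑ⱼ pⱼ αⱼ|. -/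
/-!
Since the weights sum to one, the centred coefficients `pᵢ (αᵢ - ∑ⱼ pⱼ αⱼ)` sum to zero, so the
covariance-type expression equals `∑ᵢ pᵢ (αᵢ - ∑ⱼ pⱼ αⱼ) (xᵢ - a)` for every centre `a`. The
triangle inequality and `‖xᵢ - a‖ ≤ r` then give the bound.
-/

open Finset

section Centering

variable {ι R M : Type*} [CommRing R] [AddCommGroup M] [Module R M]
  (s : Finset ι) (w α : ι → R)

theorem sum_mul_sub_weightedMean_eq_zero (hw : ∑ i ∈ s, w i = 1) :
    ∑ i ∈ s, w i * (α i - ∑ j ∈ s, w j * α j) = 0 := by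
  simp only [mul_sub, sum_sub_distrib, ← sum_mul, hw, one_mul, sub_self]

theorem weightedCovariance_eq_sum_centered (hw : ∑ i ∈ s, w i = 1) (x : ι → M) (a : M) :
    ∑ i ∈ s, w i • α i • x i - (∑ i ∈ s, w i * α i) • ∑ i ∈ s, w i • x i
      = ∑ i ∈ s, (w i * (α i - ∑ j ∈ s, w j * α j)) • (x i - a) := by
  set β := ∑ j ∈ s, w j * α j
  have hcentered : ∑ i ∈ s, (w i * (α i - β)) • a = 0 := by
    rw [← sum_smul, sum_mul_sub_weightedMean_eq_zero s w α hw, zero_smul]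
  simp only [smul_sub, sum_sub_distrib, hcentered, sub_zero, smul_sum]
  simp only [mul_sub, sub_smul, sum_sub_distrib, mul_smul, smul_comm β]

end Centering

theorem norm_sum_smul_le_mul_sum_norm {ι 𝕜 E : Type*} [NormedField 𝕜]
    [SeminormedAddCommGroup E] [NormedSpace 𝕜 E] (s : Finset ι) (c : ι → 𝕜) (y : ι → E)
    {r : ℝ} (hy : ∀ i ∈ s, ‖y i‖ ≤ r) :
    ‖∑ i ∈ s, c i • y i‖ ≤ r * ∑ i ∈ s, ‖c i‖ := by
  calc ‖∑ i ∈ s, c i • y i‖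
      ≤ ∑ i ∈ s, ‖c i • y i‖ := norm_sum_le _ _
    _ ≤ ∑ i ∈ s, ‖c i‖ * r := sum_le_sum fun i hi => by
        rw [norm_smul]; exact mul_le_mul_of_nonneg_left (hy i hi) (norm_nonneg _)
    _ = r * ∑ i ∈ s, ‖c i‖ := by rw [mul_sum]; simp only [mul_comm]

theorem gruss_scalar_bound_abs_general {H : Type*} [NormedAddCommGroup H] [NormedSpace ℂ H]
    (n : ℕ) (x : Fin n → H) (α : Fin n → ℂ) (p : Fin n → ℝ)
    (hp : ∀ i, 0 ≤ p i) (hsum : ∑ i, p i = 1) (a : H) (r : ℝ)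
    (hx : ∀ i, ‖x i - a‖ ≤ r) :
    ‖∑ i, (p i : ℂ) • α i • x i - (∑ i, (p i : ℂ) * α i) • ∑ i, (p i : ℂ) • x i‖
      ≤ r * ∑ i, p i * ‖α i - ∑ j, (p j : ℂ) * α j‖ := by
  have hsumC : ∑ i, (p i : ℂ) = 1 := by exact_mod_cast hsum
  rw [weightedCovariance_eq_sum_centered _ _ α hsumC x a]
  convert norm_sum_smul_le_mul_sum_norm _ _ _ fun i _ => hx i using 3 with i
  rw [norm_mul, Complex.norm_real, Real.norm_of_nonneg (hp i)]

theorem gruss_scalar_bound_abs {H : Type*} [NormedAddCommGroup H] [NormedSpace ℂ H]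
    (n : ℕ) (hn : 1 ≤ n) (x : Fin n → H) (α : Fin n → ℂ) (p : Fin n → ℝ)
    (hp : ∀ i, 0 ≤ p i) (hsum : ∑ i, p i = 1) (a : H) (r : ℝ) (hr : 0 ≤ r)
    (hx : ∀ i, ‖x i - a‖ ≤ r) :
    ‖∑ i, (p i : ℂ) • α i • x i - (∑ i, (p i : ℂ) * α i) • ∑ i, (p i : ℂ) • x i‖
      ≤ r * ∑ i, p i * ‖α i - ∑ j, (p j : ℂ) * α j‖ :=
  gruss_scalar_bound_abs_general n x α p hp hsum a r hx
end

section
/- Let H be a normed space over ℂ, n ≥ 1, x₁,…,xₙ ∈ H, α₁,…,αₙ ∈ ℂ, p a probability vector, a ∈ H, r ≥ 0. If ‖xᵢ − a‖ ≤ r for all i, then ‖∑ᵢ pᵢ αᵢ xᵢ − (∑ᵢ pᵢ αᵢ)(∑ᵢ pᵢ xᵢ)‖ ≤ r · (∑ᵢ pᵢ|αᵢ|² − |∑ᵢ pᵢ αᵢ|²)^{1/2}. -/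
/-!
Since the weights sum to one, the Grüss-type difference equals `∑ pᵢ (αᵢ - c) • (xᵢ - a)` with
`c = ∑ pᵢ αᵢ`, for any centre `a`. Its norm is therefore at most `r ∑ pᵢ |αᵢ - c|`, and by the
power-mean inequality this weighted mean is at most the square root of the weighted variance
`∑ pᵢ |αᵢ - c|² = ∑ pᵢ |αᵢ|² - |c|²`.
-/

open Finset

theorem sum_smul_smul_sub_sum_mul_smul_sum_smul {ι R M : Type*} [Fintype ι] [CommRing R]
    [AddCommGroup M] [Module R M] (w α : ι → R) (x : ι → M) (a : M) (hw : ∑ i, w i = 1) :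
    ∑ i, w i • α i • x i - (∑ i, w i * α i) • ∑ i, w i • x i
      = ∑ i, w i • ((α i - ∑ j, w j * α j) • (x i - a)) := by
  set c := ∑ j, w j * α j
  have hexpand : ∀ i, w i • ((α i - c) • (x i - a))
      = w i • α i • x i - c • w i • x i - (w i * α i) • a + c • w i • a := fun i => by module
  simp only [hexpand, sum_add_distrib, sum_sub_distrib, ← smul_sum, ← sum_smul, hw, one_smul]
  abel

theorem norm_sum_ofReal_smul_le {ι 𝕜 E : Type*} [Fintype ι] [RCLike 𝕜] [SeminormedAddCommGroup E]
    [NormedSpace 𝕜 E] (p : ι → ℝ) (hp : ∀ i, 0 ≤ p i) (y : ι → E) :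
    ‖∑ i, (p i : 𝕜) • y i‖ ≤ ∑ i, p i * ‖y i‖ :=
  (norm_sum_le _ _).trans_eq <| sum_congr rfl fun i _ => by
    rw [norm_smul, RCLike.norm_ofReal, abs_of_nonneg (hp i)]

theorem sum_mul_le_sqrt_sum_mul_sq {ι : Type*} [Fintype ι] (p z : ι → ℝ) (hp : ∀ i, 0 ≤ p i)
    (hsum : ∑ i, p i = 1) (hz : ∀ i, 0 ≤ z i) :
    ∑ i, p i * z i ≤ Real.sqrt (∑ i, p i * z i ^ 2) :=
  Real.le_sqrt_of_sq_le <|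
    Real.pow_arith_mean_le_arith_mean_pow univ p z (fun i _ => hp i) hsum (fun i _ => hz i) 2

theorem sum_mul_norm_sub_sum_smul_sq {ι E : Type*} [Fintype ι] [NormedAddCommGroup E]
    [InnerProductSpace ℝ E] (p : ι → ℝ) (hsum : ∑ i, p i = 1) (α : ι → E) :
    ∑ i, p i * ‖α i - ∑ j, p j • α j‖ ^ 2 = ∑ i, p i * ‖α i‖ ^ 2 - ‖∑ j, p j • α j‖ ^ 2 := by
  set c := ∑ j, p j • α j
  have hcross : ∑ i, p i * inner ℝ (α i) c = ‖c‖ ^ 2 := by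
    simp only [← real_inner_smul_left, ← sum_inner, real_inner_self_eq_norm_sq, c]
  simp only [norm_sub_sq_real, mul_add, mul_sub, sum_add_distrib, sum_sub_distrib, ← sum_mul,
    hsum, mul_left_comm _ (2 : ℝ), ← mul_sum, hcross]
  ring

theorem gruss_scalar_bound_sqrt_general {H : Type*} [NormedAddCommGroup H] [NormedSpace ℂ H]
    (n : ℕ) (x : Fin n → H) (α : Fin n → ℂ) (p : Fin n → ℝ)
    (hp : ∀ i, 0 ≤ p i) (hsum : ∑ i, p i = 1) (a : H) (r : ℝ) (hr : 0 ≤ r)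
    (hx : ∀ i, ‖x i - a‖ ≤ r) :
    ‖∑ i, (p i : ℂ) • α i • x i - (∑ i, (p i : ℂ) * α i) • ∑ i, (p i : ℂ) • x i‖
      ≤ r * Real.sqrt (∑ i, p i * ‖α i‖ ^ 2
          - ‖∑ i, (p i : ℂ) * α i‖ ^ 2) := by
  have hmean : ∑ i, (p i : ℂ) * α i = ∑ i, p i • α i := by simp only [Complex.real_smul]
  have hpc : ∑ i, (p i : ℂ) = 1 := by exact_mod_cast hsum
  rw [sum_smul_smul_sub_sum_mul_smul_sum_smul _ _ _ a hpc, hmean,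
    ← sum_mul_norm_sub_sum_smul_sq p hsum α]
  set c := ∑ i, p i • α i
  calc ‖∑ i, (p i : ℂ) • ((α i - c) • (x i - a))‖
      ≤ ∑ i, p i * ‖(α i - c) • (x i - a)‖ := norm_sum_ofReal_smul_le p hp _
    _ ≤ ∑ i, p i * (r * ‖α i - c‖) := by
        gcongr with i
        · exact hp i
        rw [norm_smul, mul_comm]
        exact mul_le_mul_of_nonneg_right (hx i) (norm_nonneg _)
    _ = r * ∑ i, p i * ‖α i - c‖ := by simp only [mul_sum, mul_left_comm]
    _ ≤ r * Real.sqrt (∑ i, p i * ‖α i - c‖ ^ 2) := by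
        gcongr
        exact sum_mul_le_sqrt_sum_mul_sq p _ hp hsum fun i => norm_nonneg _

theorem gruss_scalar_bound_sqrt {H : Type*} [NormedAddCommGroup H] [NormedSpace ℂ H]
    (n : ℕ) (hn : 1 ≤ n) (x : Fin n → H) (α : Fin n → ℂ) (p : Fin n → ℝ)
    (hp : ∀ i, 0 ≤ p i) (hsum : ∑ i, p i = 1) (a : H) (r : ℝ) (hr : 0 ≤ r)
    (hx : ∀ i, ‖x i - a‖ ≤ r) :
    ‖∑ i, (p i : ℂ) • α i • x i - (∑ i, (p i : ℂ) * α i) • ∑ i, (p i : ℂ) • x i‖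
      ≤ r * Real.sqrt (∑ i, p i * ‖α i‖ ^ 2
          - ‖∑ i, (p i : ℂ) * α i‖ ^ 2) :=
  gruss_scalar_bound_sqrt_general n x α p hp hsum a r hr hx
end

section
/- Let H be an inner product space over ℂ, n ≥ 1, x₁,…,xₙ, y₁,…,yₙ ∈ H, ω ∈ ℝ, m ∈ {1,…,n}, a, b ∈ H, r, s ≥ 0. Suppose ‖xₖ − a‖ ≤ r and ‖exp(2ωimk)·yₖ − b‖ ≤ s for all k ∈ {1,…,n}. Define the discrete Fourier transform F_ω(y)(m) = ∑ₖ exp(2ωimk)·yₖ and F_ω(x,y)(m) = ∑ₖ exp(2ωimk)·⟨xₖ, yₖ⟩. Then ‖F_ω(x,y)(m) − ⟨(1/n)∑ₖ xₖ, F_ω(y)(m)⟩‖ ≤ n·r·s. -/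
open scoped InnerProductSpace
open Finset

/-! Write `x̄` for the mean of the `xₖ` and `zₖ = exp(2ωimk) • yₖ`. Since the deviations `xₖ - x̄`
sum to zero, the left-hand side equals `∑ₖ ⟪xₖ - x̄, zₖ - b⟫`, which is at most `s ∑ₖ ‖xₖ - x̄‖`.
The mean minimises `c ↦ ∑ₖ ‖xₖ - c‖²`, so `∑ₖ ‖xₖ - x̄‖² ≤ n r²`, and Cauchy–Schwarz turns this
into `∑ₖ ‖xₖ - x̄‖ ≤ n r`. -/

section Gruss

variable (𝕜 : Type*) {E ι : Type*} [RCLike 𝕜] [NormedAddCommGroup E] [InnerProductSpace 𝕜 E]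
  (s : Finset ι) (x : ι → E)

theorem sum_sub_mean_eq_zero : ∑ i ∈ s, (x i - (#s : 𝕜)⁻¹ • ∑ j ∈ s, x j) = 0 := by
  rcases s.eq_empty_or_nonempty with rfl | hs
  · simp
  rw [sum_sub_distrib, sum_const, ← Nat.cast_smul_eq_nsmul 𝕜, smul_smul,
    mul_inv_cancel₀ (by simpa using hs.ne_empty), one_smul, sub_self]

theorem sum_norm_sub_sq_eq (a : E) :
    ∑ i ∈ s, ‖x i - a‖ ^ 2 = ∑ i ∈ s, ‖x i - (#s : 𝕜)⁻¹ • ∑ j ∈ s, x j‖ ^ 2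
      + #s * ‖(#s : 𝕜)⁻¹ • ∑ j ∈ s, x j - a‖ ^ 2 := by
  set m := (#s : 𝕜)⁻¹ • ∑ j ∈ s, x j
  have hcross : ∑ i ∈ s, 2 * RCLike.re ⟪x i - m, m - a⟫_𝕜 = 0 := by
    rw [← mul_sum, ← map_sum, ← sum_inner, sum_sub_mean_eq_zero, inner_zero_left, map_zero,
      mul_zero]
  calc ∑ i ∈ s, ‖x i - a‖ ^ 2 = ∑ i ∈ s, ‖(x i - m) + (m - a)‖ ^ 2 := by simp
    _ = _ := by
      simp only [norm_add_sq (𝕜 := 𝕜), sum_add_distrib, hcross, add_zero, sum_const, nsmul_eq_mul]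

theorem sum_norm_sub_mean_le {a : E} {r : ℝ} (hx : ∀ i ∈ s, ‖x i - a‖ ≤ r) :
    ∑ i ∈ s, ‖x i - (#s : 𝕜)⁻¹ • ∑ j ∈ s, x j‖ ≤ #s * r := by
  rcases s.eq_empty_or_nonempty with rfl | ⟨i₀, hi₀⟩
  · simp
  have hr : 0 ≤ r := (norm_nonneg _).trans (hx i₀ hi₀)
  have hvar : ∑ i ∈ s, ‖x i - (#s : 𝕜)⁻¹ • ∑ j ∈ s, x j‖ ^ 2 ≤ #s * r ^ 2 :=
    calc _ ≤ ∑ i ∈ s, ‖x i - a‖ ^ 2 := by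
          rw [sum_norm_sub_sq_eq 𝕜 s x a]
          exact le_add_of_nonneg_right (by positivity)
      _ ≤ ∑ _i ∈ s, r ^ 2 := sum_le_sum fun i hi ↦ by gcongr; exact hx i hi
      _ = #s * r ^ 2 := by rw [sum_const, nsmul_eq_mul]
  refine abs_le_of_sq_le_sq' ?_ (by positivity) |>.2
  calc _ ≤ #s * ∑ i ∈ s, ‖x i - (#s : 𝕜)⁻¹ • ∑ j ∈ s, x j‖ ^ 2 := sq_sum_le_card_mul_sum_sq
    _ ≤ #s * (#s * r ^ 2) := by gcongr
    _ = (#s * r) ^ 2 := by ring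

variable {𝕜} (z : ι → E)

theorem sum_inner_sub_mean_sub (b : E) :
    ∑ i ∈ s, ⟪x i - (#s : 𝕜)⁻¹ • ∑ j ∈ s, x j, z i - b⟫_𝕜
      = ∑ i ∈ s, ⟪x i, z i⟫_𝕜 - ⟪(#s : 𝕜)⁻¹ • ∑ j ∈ s, x j, ∑ i ∈ s, z i⟫_𝕜 := by
  simp only [inner_sub_right, sum_sub_distrib]
  rw [← sum_inner, sum_sub_mean_eq_zero, inner_zero_left, sub_zero, inner_sum]
  simp only [inner_sub_left, sum_sub_distrib]

theorem norm_sum_inner_sub_inner_mean_le {a b : E} {r r' : ℝ} (hx : ∀ i ∈ s, ‖x i - a‖ ≤ r)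
    (hz : ∀ i ∈ s, ‖z i - b‖ ≤ r') :
    ‖∑ i ∈ s, ⟪x i, z i⟫_𝕜 - ⟪(#s : 𝕜)⁻¹ • ∑ j ∈ s, x j, ∑ i ∈ s, z i⟫_𝕜‖ ≤ #s * r * r' := by
  rcases s.eq_empty_or_nonempty with rfl | ⟨i₀, hi₀⟩
  · simp
  have hr' : 0 ≤ r' := (norm_nonneg _).trans (hz i₀ hi₀)
  rw [← sum_inner_sub_mean_sub s x z b]
  calc _ ≤ ∑ i ∈ s, ‖x i - (#s : 𝕜)⁻¹ • ∑ j ∈ s, x j‖ * ‖z i - b‖ :=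
        (norm_sum_le _ _).trans (sum_le_sum fun i _ ↦ norm_inner_le_norm _ _)
    _ ≤ ∑ i ∈ s, ‖x i - (#s : 𝕜)⁻¹ • ∑ j ∈ s, x j‖ * r' :=
        sum_le_sum fun i hi ↦ by gcongr; exact hz i hi
    _ ≤ #s * r * r' := by
        rw [← sum_mul]
        exact mul_le_mul_of_nonneg_right (sum_norm_sub_mean_le 𝕜 s x hx) hr'

end Gruss

theorem fourier_gruss_approx_general {H : Type*} [NormedAddCommGroup H] [InnerProductSpace ℂ H]
    (n : ℕ) (x y : ℕ → H) (ω : ℝ) (m : ℕ)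
    (a b : H) (r s : ℝ)
    (hx : ∀ k ∈ Finset.Icc 1 n, ‖x k - a‖ ≤ r)
    (hy : ∀ k ∈ Finset.Icc 1 n,
      ‖Complex.exp (2 * (ω : ℂ) * Complex.I * (m : ℂ) * (k : ℂ)) • y k - b‖ ≤ s) :
    ‖(∑ k ∈ Finset.Icc 1 n, Complex.exp (2 * (ω : ℂ) * Complex.I * (m : ℂ) * (k : ℂ))
            * ⟪x k, y k⟫_ℂ
          - ⟪(1 / (n : ℂ)) • ∑ k ∈ Finset.Icc 1 n, x k,
              ∑ k ∈ Finset.Icc 1 n,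
                Complex.exp (2 * (ω : ℂ) * Complex.I * (m : ℂ) * (k : ℂ)) • y k⟫_ℂ)‖
      ≤ (n : ℝ) * r * s := by
  have hmean : 1 / (n : ℂ) = (#(Icc 1 n) : ℂ)⁻¹ := by simp
  have hcard : (n : ℝ) = #(Icc 1 n) := by simp
  simp_rw [← inner_smul_right, hmean, hcard]
  exact norm_sum_inner_sub_inner_mean_le _ _ _ hx hy

theorem fourier_gruss_approx {H : Type*} [NormedAddCommGroup H] [InnerProductSpace ℂ H]
    (n : ℕ) (hn : 1 ≤ n) (x y : ℕ → H) (ω : ℝ) (m : ℕ) (hm : m ∈ Finset.Icc 1 n)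
    (a b : H) (r s : ℝ) (hr : 0 ≤ r) (hs : 0 ≤ s)
    (hx : ∀ k ∈ Finset.Icc 1 n, ‖x k - a‖ ≤ r)
    (hy : ∀ k ∈ Finset.Icc 1 n,
      ‖Complex.exp (2 * (ω : ℂ) * Complex.I * (m : ℂ) * (k : ℂ)) • y k - b‖ ≤ s) :
    ‖(∑ k ∈ Finset.Icc 1 n, Complex.exp (2 * (ω : ℂ) * Complex.I * (m : ℂ) * (k : ℂ))
            * ⟪x k, y k⟫_ℂ
          - ⟪(1 / (n : ℂ)) • ∑ k ∈ Finset.Icc 1 n, x k,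
              ∑ k ∈ Finset.Icc 1 n,
                Complex.exp (2 * (ω : ℂ) * Complex.I * (m : ℂ) * (k : ℂ)) • y k⟫_ℂ)‖
      ≤ (n : ℝ) * r * s :=
  fourier_gruss_approx_general n x y ω m a b r s hx hy
end

section
/- Let H be an inner product space over ℂ, n ≥ 1, x₁,…,xₙ, y₁,…,yₙ ∈ H, m ∈ {1,…,n}, a, b ∈ H, r, s ≥ 0. Suppose ‖xₖ − a‖ ≤ r and ‖k^{m−1}·yₖ − b‖ ≤ s for all k ∈ {1,…,n}. Define the discrete Mellin transform M(y)(m) = ∑ₖ k^{m−1} yₖ and M(x,y)(m) = ∑ₖ k^{m−1}⟨xₖ, yₖ⟩. Then |M(x,y)(m) − ⟨(1/n)∑ₖ xₖ, M(y)(m)⟩| ≤ n·r·s. -/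
/-!
Write `c` for the mean of the `xₖ` and `uₖ = k^{m-1} yₖ`. Since the `xₖ - c` sum to zero, the
defect `∑ₖ ⟪xₖ, uₖ⟫ - ⟪c, ∑ₖ uₖ⟫` equals `∑ₖ ⟪xₖ - c, uₖ - d⟫` for any `d`, in particular for the
mean `d` of the `uₖ`. Cauchy–Schwarz bounds this by `√(∑ ‖xₖ - c‖²) √(∑ ‖uₖ - d‖²)`, and since a mean
minimises the sum of squared distances, `∑ ‖xₖ - c‖² ≤ ∑ ‖xₖ - a‖² ≤ n r²`, and likewise for `u`.
-/

open scoped InnerProductSpace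
open Finset

theorem Finset.sum_sub_average_eq_zero {𝕜 E ι : Type*} [DivisionRing 𝕜] [CharZero 𝕜]
    [AddCommGroup E] [Module 𝕜 E] (s : Finset ι) (v : ι → E) :
    ∑ i ∈ s, (v i - (1 / (#s : 𝕜)) • ∑ j ∈ s, v j) = 0 := by
  rcases s.eq_empty_or_nonempty with rfl | hs
  · simp
  rw [sum_sub_distrib, sum_const, ← Nat.cast_smul_eq_nsmul 𝕜, smul_smul,
    mul_one_div_cancel (Nat.cast_ne_zero.mpr hs.card_ne_zero), one_smul, sub_self]

namespace Finset

variable {𝕜 E ι : Type*} [RCLike 𝕜] [NormedAddCommGroup E] [InnerProductSpace 𝕜 E]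
  (s : Finset ι)

theorem sum_inner_sub_average_sub (u v : ι → E) (w : E) :
    ∑ i ∈ s, ⟪u i - (1 / (#s : 𝕜)) • ∑ j ∈ s, u j, v i - w⟫_𝕜
      = ∑ i ∈ s, ⟪u i, v i⟫_𝕜 - ⟪(1 / (#s : 𝕜)) • ∑ j ∈ s, u j, ∑ i ∈ s, v i⟫_𝕜 := by
  simp only [inner_sub_right]
  rw [sum_sub_distrib, ← sum_inner, sum_sub_average_eq_zero, inner_zero_left, sub_zero]
  simp only [inner_sub_left]
  rw [sum_sub_distrib, ← inner_sum]

theorem sum_norm_sub_sq_eq_sum_norm_sub_average_sq_add (v : ι → E) (w : E) :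
    ∑ i ∈ s, ‖v i - w‖ ^ 2
      = ∑ i ∈ s, ‖v i - (1 / (#s : 𝕜)) • ∑ j ∈ s, v j‖ ^ 2
        + #s * ‖(1 / (#s : 𝕜)) • ∑ j ∈ s, v j - w‖ ^ 2 := by
  set c : E := (1 / (#s : 𝕜)) • ∑ j ∈ s, v j
  have hcross : ∑ i ∈ s, 2 * RCLike.re ⟪v i - c, c - w⟫_𝕜 = 0 := by
    rw [← mul_sum, ← map_sum, ← sum_inner, sum_sub_average_eq_zero, inner_zero_left,
      map_zero, mul_zero]
  have hsplit (i : ι) : v i - w = (v i - c) + (c - w) := by abel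
  simp only [hsplit, @norm_add_sq 𝕜, sum_add_distrib, hcross, add_zero, sum_const, nsmul_eq_mul]

theorem sum_norm_sub_average_sq_le (v : ι → E) (w : E) :
    ∑ i ∈ s, ‖v i - (1 / (#s : 𝕜)) • ∑ j ∈ s, v j‖ ^ 2 ≤ ∑ i ∈ s, ‖v i - w‖ ^ 2 := by
  rw [sum_norm_sub_sq_eq_sum_norm_sub_average_sq_add (𝕜 := 𝕜) s v w]
  exact le_add_of_nonneg_right (by positivity)

/-- Discrete Grüss inequality in an inner product space. -/
theorem norm_sum_inner_sub_inner_average_le_sqrt_mul_sqrt (u v : ι → E) (a b : E) :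
    ‖∑ i ∈ s, ⟪u i, v i⟫_𝕜 - ⟪(1 / (#s : 𝕜)) • ∑ j ∈ s, u j, ∑ i ∈ s, v i⟫_𝕜‖
      ≤ √(∑ i ∈ s, ‖u i - a‖ ^ 2) * √(∑ i ∈ s, ‖v i - b‖ ^ 2) := by
  set c : E := (1 / (#s : 𝕜)) • ∑ j ∈ s, u j
  set d : E := (1 / (#s : 𝕜)) • ∑ j ∈ s, v j
  rw [← sum_inner_sub_average_sub s u v d]
  calc ‖∑ i ∈ s, ⟪u i - c, v i - d⟫_𝕜‖
      ≤ ∑ i ∈ s, ‖u i - c‖ * ‖v i - d‖ :=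
        (norm_sum_le _ _).trans (sum_le_sum fun i _ ↦ norm_inner_le_norm _ _)
    _ ≤ √(∑ i ∈ s, ‖u i - c‖ ^ 2) * √(∑ i ∈ s, ‖v i - d‖ ^ 2) :=
        Real.sum_mul_le_sqrt_mul_sqrt s _ _
    _ ≤ √(∑ i ∈ s, ‖u i - a‖ ^ 2) * √(∑ i ∈ s, ‖v i - b‖ ^ 2) := by
        gcongr ?_ * ?_ <;> exact Real.sqrt_le_sqrt (sum_norm_sub_average_sq_le s _ _)

theorem norm_sum_inner_sub_inner_average_le (u v : ι → E) (a b : E) {r t : ℝ}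
    (hr : 0 ≤ r) (ht : 0 ≤ t) (hu : ∀ i ∈ s, ‖u i - a‖ ≤ r) (hv : ∀ i ∈ s, ‖v i - b‖ ≤ t) :
    ‖∑ i ∈ s, ⟪u i, v i⟫_𝕜 - ⟪(1 / (#s : 𝕜)) • ∑ j ∈ s, u j, ∑ i ∈ s, v i⟫_𝕜‖
      ≤ #s * r * t := by
  have hsq {f : ι → E} {z : E} {ρ : ℝ} (hρ : 0 ≤ ρ) (hf : ∀ i ∈ s, ‖f i - z‖ ≤ ρ) :
      √(∑ i ∈ s, ‖f i - z‖ ^ 2) ≤ √(#s : ℝ) * ρ := by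
    rw [← Real.sqrt_sq hρ, ← Real.sqrt_mul (Nat.cast_nonneg _)]
    gcongr
    simpa using sum_le_sum fun i hi ↦ pow_le_pow_left₀ (norm_nonneg _) (hf i hi) 2
  calc _ ≤ √(∑ i ∈ s, ‖u i - a‖ ^ 2) * √(∑ i ∈ s, ‖v i - b‖ ^ 2) :=
        norm_sum_inner_sub_inner_average_le_sqrt_mul_sqrt s u v a b
    _ ≤ (√(#s : ℝ) * r) * (√(#s : ℝ) * t) := by gcongr <;> [exact hsq hr hu; exact hsq ht hv]
    _ = #s * r * t := by
        rw [mul_mul_mul_comm, Real.mul_self_sqrt (Nat.cast_nonneg _), mul_assoc]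

end Finset

theorem mellin_gruss_approx_general {H : Type*} [NormedAddCommGroup H] [InnerProductSpace ℂ H]
    (n : ℕ) (x y : ℕ → H) (m : ℕ)
    (a b : H) (r s : ℝ) (hr : 0 ≤ r) (hs : 0 ≤ s)
    (hx : ∀ k ∈ Finset.Icc 1 n, ‖x k - a‖ ≤ r)
    (hy : ∀ k ∈ Finset.Icc 1 n, ‖((k : ℂ) ^ (m - 1)) • y k - b‖ ≤ s) :
    ‖(∑ k ∈ Finset.Icc 1 n, ((k : ℂ) ^ (m - 1)) * ⟪x k, y k⟫_ℂ
          - ⟪(1 / (n : ℂ)) • ∑ k ∈ Finset.Icc 1 n, x k,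
              ∑ k ∈ Finset.Icc 1 n, ((k : ℂ) ^ (m - 1)) • y k⟫_ℂ)‖
      ≤ (n : ℝ) * r * s := by
  have hgruss := norm_sum_inner_sub_inner_average_le (𝕜 := ℂ) (Icc 1 n) x
    (fun k ↦ ((k : ℂ) ^ (m - 1)) • y k) a b hr hs hx hy
  simpa only [inner_smul_right, Nat.card_Icc, add_tsub_cancel_right] using hgruss

theorem mellin_gruss_approx {H : Type*} [NormedAddCommGroup H] [InnerProductSpace ℂ H]
    (n : ℕ) (hn : 1 ≤ n) (x y : ℕ → H) (m : ℕ) (hm : m ∈ Finset.Icc 1 n)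
    (a b : H) (r s : ℝ) (hr : 0 ≤ r) (hs : 0 ≤ s)
    (hx : ∀ k ∈ Finset.Icc 1 n, ‖x k - a‖ ≤ r)
    (hy : ∀ k ∈ Finset.Icc 1 n, ‖((k : ℂ) ^ (m - 1)) • y k - b‖ ≤ s) :
    ‖(∑ k ∈ Finset.Icc 1 n, ((k : ℂ) ^ (m - 1)) * ⟪x k, y k⟫_ℂ
          - ⟪(1 / (n : ℂ)) • ∑ k ∈ Finset.Icc 1 n, x k,
              ∑ k ∈ Finset.Icc 1 n, ((k : ℂ) ^ (m - 1)) • y k⟫_ℂ)‖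
      ≤ (n : ℝ) * r * s :=
  mellin_gruss_approx_general n x y m a b r s hr hs hx hy
end

section
/- Let H be an inner product space over ℂ, n ≥ 1, x₁,…,xₙ, y₁,…,yₙ ∈ H, ω₁, ω₂ ∈ ℝ, m ∈ {1,…,n}, a, b ∈ H, r, s ≥ 0. Suppose ‖exp(2ω₁imk)·xₖ − a‖ ≤ r and ‖exp(2ω₂imk)·yₖ − b‖ ≤ s for all k. Then |(1/n)∑ₖ exp(2(ω₂−ω₁)imk)⟨xₖ,yₖ⟩ − ⟨(1/n)∑ₖ exp(2ω₁imk)xₖ, (1/n)∑ₖ exp(2ω₂imk)yₖ⟩| ≤ r·s. -/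
open scoped InnerProductSpace
open Finset

/-!
The twisted vectors `exp(2ωⱼimk)·xₖ` and `exp(2ωⱼimk)·yₖ` have inner products
`exp(2(ω₂-ω₁)imk)⟨xₖ,yₖ⟩`, so the claim is Grüss's inequality for the two twisted families.
That inequality holds because the difference of the mean of inner products and the inner
product of the means is the mean of `⟨uₖ - ū, vₖ - v̄⟩`; by Cauchy–Schwarz this is at most
the geometric mean of the two variances, and the mean minimises the sum of squared distances,
so each variance is bounded by the squared radius of a ball containing its family.
-/

theorem Finset.sum_sub_average_eq_zero_s14 {ι 𝕜 M : Type*} [DivisionRing 𝕜] [CharZero 𝕜]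
    [AddCommGroup M] [Module 𝕜 M] {F : Finset ι} (hF : F.Nonempty) (u : ι → M) :
    ∑ k ∈ F, (u k - (#F : 𝕜)⁻¹ • ∑ j ∈ F, u j) = 0 := by
  have hcard : (#F : 𝕜) ≠ 0 := Nat.cast_ne_zero.2 hF.card_pos.ne'
  rw [sum_sub_distrib, sum_const, ← Nat.cast_smul_eq_nsmul 𝕜, smul_smul,
    mul_inv_cancel₀ hcard, one_smul, sub_self]

section InnerProductSpace

variable {ι 𝕜 H : Type*} [RCLike 𝕜] [NormedAddCommGroup H] [InnerProductSpace 𝕜 H]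
  {F : Finset ι}

theorem Finset.sum_norm_sub_average_sq_le_s14 (hF : F.Nonempty) (u : ι → H) (a : H) :
    ∑ k ∈ F, ‖u k - (#F : 𝕜)⁻¹ • ∑ j ∈ F, u j‖ ^ 2 ≤ ∑ k ∈ F, ‖u k - a‖ ^ 2 := by
  set ubar : H := (#F : 𝕜)⁻¹ • ∑ j ∈ F, u j
  have hsplit : ∀ k, ‖u k - a‖ ^ 2
      = ‖u k - ubar‖ ^ 2 + 2 * RCLike.re ⟪u k - ubar, ubar - a⟫_𝕜 + ‖ubar - a‖ ^ 2 := fun k => by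
    rw [← norm_add_sq, sub_add_sub_cancel]
  have hcross : ∑ k ∈ F, 2 * RCLike.re ⟪u k - ubar, ubar - a⟫_𝕜 = 0 := by
    rw [← mul_sum, ← map_sum, ← sum_inner, sum_sub_average_eq_zero_s14 hF, inner_zero_left,
      map_zero, mul_zero]
  simp only [hsplit, sum_add_distrib, hcross, add_zero]
  exact le_add_of_nonneg_right (sum_nonneg fun _ _ => sq_nonneg _)

theorem Finset.sum_norm_sub_average_sq_le_card_mul_sq (hF : F.Nonempty) {u : ι → H} {a : H}
    {r : ℝ} (hu : ∀ k ∈ F, ‖u k - a‖ ≤ r) :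
    ∑ k ∈ F, ‖u k - (#F : 𝕜)⁻¹ • ∑ j ∈ F, u j‖ ^ 2 ≤ #F * r ^ 2 :=
  calc _ ≤ ∑ k ∈ F, ‖u k - a‖ ^ 2 := sum_norm_sub_average_sq_le_s14 hF u a
    _ ≤ ∑ _k ∈ F, r ^ 2 := sum_le_sum fun k hk => pow_le_pow_left₀ (norm_nonneg _) (hu k hk) 2
    _ = #F * r ^ 2 := by rw [sum_const, nsmul_eq_mul]

theorem Finset.average_inner_sub_inner_average (hF : F.Nonempty) (u v : ι → H) :
    (#F : 𝕜)⁻¹ * ∑ k ∈ F, ⟪u k, v k⟫_𝕜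
        - ⟪(#F : 𝕜)⁻¹ • ∑ k ∈ F, u k, (#F : 𝕜)⁻¹ • ∑ k ∈ F, v k⟫_𝕜
      = (#F : 𝕜)⁻¹ * ∑ k ∈ F,
          ⟪u k - (#F : 𝕜)⁻¹ • ∑ j ∈ F, u j, v k - (#F : 𝕜)⁻¹ • ∑ j ∈ F, v j⟫_𝕜 := by
  set ubar : H := (#F : 𝕜)⁻¹ • ∑ j ∈ F, u j
  set vbar : H := (#F : 𝕜)⁻¹ • ∑ j ∈ F, v j
  have hcard : (#F : 𝕜) ≠ 0 := Nat.cast_ne_zero.2 hF.card_pos.ne'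
  have hsum_v : ∑ j ∈ F, v j = (#F : 𝕜) • vbar := (smul_inv_smul₀ hcard _).symm
  have hcentred : ∑ k ∈ F, ⟪u k - ubar, v k - vbar⟫_𝕜
      = ∑ k ∈ F, ⟪u k, v k⟫_𝕜 - #F * ⟪ubar, vbar⟫_𝕜 := by
    simp only [inner_sub_right, sum_sub_distrib]
    rw [← sum_inner, sum_sub_average_eq_zero_s14 hF, inner_zero_left, sub_zero]
    simp only [inner_sub_left, sum_sub_distrib, ← inner_sum, hsum_v, inner_smul_right]
  rw [hcentred, mul_sub, inv_mul_cancel_left₀ hcard]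

theorem Finset.norm_average_inner_sub_inner_average_le (hF : F.Nonempty) {u v : ι → H}
    {a b : H} {r s : ℝ} (hu : ∀ k ∈ F, ‖u k - a‖ ≤ r) (hv : ∀ k ∈ F, ‖v k - b‖ ≤ s) :
    ‖(#F : 𝕜)⁻¹ * ∑ k ∈ F, ⟪u k, v k⟫_𝕜
        - ⟪(#F : 𝕜)⁻¹ • ∑ k ∈ F, u k, (#F : 𝕜)⁻¹ • ∑ k ∈ F, v k⟫_𝕜‖ ≤ r * s := by
  set ubar : H := (#F : 𝕜)⁻¹ • ∑ j ∈ F, u j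
  set vbar : H := (#F : 𝕜)⁻¹ • ∑ j ∈ F, v j
  set A : ℝ := ∑ k ∈ F, ‖u k - ubar‖ * ‖v k - vbar‖
  obtain ⟨k₀, hk₀⟩ := id hF
  have hr : 0 ≤ r := (norm_nonneg _).trans (hu k₀ hk₀)
  have hs : 0 ≤ s := (norm_nonneg _).trans (hv k₀ hk₀)
  have hcard : (0 : ℝ) < #F := Nat.cast_pos.2 hF.card_pos
  have hA_sq : A ^ 2 ≤ (#F * (r * s)) ^ 2 :=
    calc A ^ 2 ≤ (∑ k ∈ F, ‖u k - ubar‖ ^ 2) * ∑ k ∈ F, ‖v k - vbar‖ ^ 2 :=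
          sum_mul_sq_le_sq_mul_sq F _ _
      _ ≤ (#F * r ^ 2) * (#F * s ^ 2) :=
          mul_le_mul (sum_norm_sub_average_sq_le_card_mul_sq hF hu)
            (sum_norm_sub_average_sq_le_card_mul_sq hF hv)
            (sum_nonneg fun _ _ => sq_nonneg _) (by positivity)
      _ = (#F * (r * s)) ^ 2 := by ring
  have hA : A ≤ #F * (r * s) := pow_le_pow_iff_left₀ (by positivity) (by positivity)
    two_ne_zero |>.1 hA_sq
  rw [average_inner_sub_inner_average hF, norm_mul, norm_inv, RCLike.norm_natCast,
    inv_mul_le_iff₀ hcard]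
  calc _ ≤ ∑ k ∈ F, ‖⟪u k - ubar, v k - vbar⟫_𝕜‖ := norm_sum_le _ _
    _ ≤ A := sum_le_sum fun _ _ => norm_inner_le_norm _ _
    _ ≤ _ := hA

end InnerProductSpace

theorem fourier_two_params_gruss_general {H : Type*} [NormedAddCommGroup H] [InnerProductSpace ℂ H]
    (n : ℕ) (hn : 1 ≤ n) (x y : ℕ → H) (ω₁ ω₂ : ℝ) (m : ℕ)
    (a b : H) (r s : ℝ)
    (hx : ∀ k ∈ Finset.Icc 1 n,
      ‖Complex.exp (2 * (ω₁ : ℂ) * Complex.I * (m : ℂ) * (k : ℂ)) • x k - a‖ ≤ r)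
    (hy : ∀ k ∈ Finset.Icc 1 n,
      ‖Complex.exp (2 * (ω₂ : ℂ) * Complex.I * (m : ℂ) * (k : ℂ)) • y k - b‖ ≤ s) :
    ‖
        ((1 / (n : ℂ)) * ∑ k ∈ Finset.Icc 1 n,
            Complex.exp (2 * ((ω₂ : ℂ) - (ω₁ : ℂ)) * Complex.I * (m : ℂ) * (k : ℂ))
              * ⟪x k, y k⟫_ℂ
          - ⟪(1 / (n : ℂ)) • ∑ k ∈ Finset.Icc 1 n,
                Complex.exp (2 * (ω₁ : ℂ) * Complex.I * (m : ℂ) * (k : ℂ)) • x k,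
              (1 / (n : ℂ)) • ∑ k ∈ Finset.Icc 1 n,
                Complex.exp (2 * (ω₂ : ℂ) * Complex.I * (m : ℂ) * (k : ℂ)) • y k⟫_ℂ)‖
      ≤ r * s := by
  have hcard : #(Finset.Icc 1 n) = n := by rw [Nat.card_Icc, Nat.add_sub_cancel]
  have hnonempty : (Finset.Icc 1 n).Nonempty := nonempty_Icc.2 hn
  have htwist : ∀ k : ℕ,
      Complex.exp (2 * ((ω₂ : ℂ) - (ω₁ : ℂ)) * Complex.I * (m : ℂ) * (k : ℂ)) * ⟪x k, y k⟫_ℂ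
        = ⟪Complex.exp (2 * (ω₁ : ℂ) * Complex.I * (m : ℂ) * (k : ℂ)) • x k,
            Complex.exp (2 * (ω₂ : ℂ) * Complex.I * (m : ℂ) * (k : ℂ)) • y k⟫_ℂ := fun k => by
    rw [inner_smul_left, inner_smul_right, ← mul_assoc, ← Complex.exp_conj, ← Complex.exp_add]
    congr 2
    simp only [map_mul, map_ofNat, Complex.conj_ofReal, Complex.conj_I, map_natCast]
    ring
  have hgruss := norm_average_inner_sub_inner_average_le (𝕜 := ℂ) hnonempty hx hy
  rw [hcard] at hgruss
  simpa only [htwist, one_div] using hgruss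

theorem fourier_two_params_gruss {H : Type*} [NormedAddCommGroup H] [InnerProductSpace ℂ H]
    (n : ℕ) (hn : 1 ≤ n) (x y : ℕ → H) (ω₁ ω₂ : ℝ) (m : ℕ) (hm : m ∈ Finset.Icc 1 n)
    (a b : H) (r s : ℝ) (hr : 0 ≤ r) (hs : 0 ≤ s)
    (hx : ∀ k ∈ Finset.Icc 1 n,
      ‖Complex.exp (2 * (ω₁ : ℂ) * Complex.I * (m : ℂ) * (k : ℂ)) • x k - a‖ ≤ r)
    (hy : ∀ k ∈ Finset.Icc 1 n,
      ‖Complex.exp (2 * (ω₂ : ℂ) * Complex.I * (m : ℂ) * (k : ℂ)) • y k - b‖ ≤ s) :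
    ‖
        ((1 / (n : ℂ)) * ∑ k ∈ Finset.Icc 1 n,
            Complex.exp (2 * ((ω₂ : ℂ) - (ω₁ : ℂ)) * Complex.I * (m : ℂ) * (k : ℂ))
              * ⟪x k, y k⟫_ℂ
          - ⟪(1 / (n : ℂ)) • ∑ k ∈ Finset.Icc 1 n,
                Complex.exp (2 * (ω₁ : ℂ) * Complex.I * (m : ℂ) * (k : ℂ)) • x k,
              (1 / (n : ℂ)) • ∑ k ∈ Finset.Icc 1 n,
                Complex.exp (2 * (ω₂ : ℂ) * Complex.I * (m : ℂ) * (k : ℂ)) • y k⟫_ℂ)‖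
      ≤ r * s :=
  fourier_two_params_gruss_general n hn x y ω₁ ω₂ m a b r s hx hy
end

section
/- Let H be an inner product space, x₁,…,xₙ ∈ H, a ∈ H, r ≥ 0 with ‖xₖ − a‖ ≤ r for all k, and let ω ∈ ℝ, m ∈ {1,…,n} with ωm ∉ πℤ. Then ‖∑ₖ exp(2ωimk)xₖ − (sin(ωmn)/sin(ωm))·exp(ω(n+1)im)·(1/n)∑ₖ xₖ‖ ≤ r·(n² − sin²(ωmn)/sin²(ωm))^{1/2}. -/
open Finset

lemma step_id (θ ψ : ℝ) :
    ((Real.sin (ψ - θ) : ℝ):ℂ) + (Real.sin θ : ℝ) * Complex.exp ((ψ:ℂ)*Complex.I)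
      = ((Real.sin ψ : ℝ):ℂ) * Complex.exp ((θ:ℂ)*Complex.I) := by
  have h1 := Real.sin_sub ψ θ
  apply Complex.ext <;>
    simp [-Complex.ofReal_sin, Complex.exp_ofReal_mul_I_re, Complex.exp_ofReal_mul_I_im,
      Complex.add_re, Complex.mul_re, Complex.mul_im] <;> nlinarith [h1]

lemma sum_exp (θ : ℝ) (hθ : Real.sin θ ≠ 0) (n : ℕ) :
    ∑ k ∈ Icc 1 n, Complex.exp (2*(θ:ℂ)*Complex.I*(k:ℂ))
      = ((Real.sin (θ*n)/Real.sin θ : ℝ):ℂ) * Complex.exp ((θ:ℂ)*((n:ℂ)+1)*Complex.I) := by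
  induction n with
  | zero => simp
  | succ n ih =>
    rw [Finset.sum_Icc_succ_top (by omega : 1 ≤ n+1), ih]
    have hs : ((Real.sin θ : ℝ):ℂ) ≠ 0 := by exact_mod_cast hθ
    have e1 : Complex.exp (2*(θ:ℂ)*Complex.I*((n:ℂ)+1))
        = Complex.exp ((θ:ℂ)*((n:ℂ)+1)*Complex.I) * Complex.exp ((θ:ℂ)*((n:ℂ)+1)*Complex.I) := by
      rw [← Complex.exp_add]; ring_nf
    have e2 : Complex.exp ((θ:ℂ)*(((n:ℂ)+1)+1)*Complex.I)
        = Complex.exp ((θ:ℂ)*((n:ℂ)+1)*Complex.I) * Complex.exp ((θ:ℂ)*Complex.I) := by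
      rw [← Complex.exp_add]; ring_nf
    have key := step_id θ (θ*(n+1))
    rw [show θ*(n+1) - θ = θ*n by ring] at key
    push_cast at key hs ⊢
    rw [e1, e2]
    field_simp
    linear_combination key

theorem fourier_transform_approx {H : Type*} [NormedAddCommGroup H] [InnerProductSpace ℂ H]
    (n : ℕ) (hn : 1 ≤ n) (x : ℕ → H) (a : H) (r : ℝ) (hr : 0 ≤ r)
    (hx : ∀ k ∈ Finset.Icc 1 n, ‖x k - a‖ ≤ r)
    (ω : ℝ) (m : ℕ) (hm : m ∈ Finset.Icc 1 n) (hωm : ∀ l : ℤ, ω * m ≠ l * Real.pi) :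
    ‖∑ k ∈ Finset.Icc 1 n, Complex.exp (2 * (ω : ℂ) * Complex.I * (m : ℂ) * (k : ℂ)) • x k
        - (((Real.sin (ω * m * n) / Real.sin (ω * m) : ℝ) : ℂ)
            * Complex.exp ((ω : ℂ) * ((n : ℂ) + 1) * Complex.I * (m : ℂ))
            * (1 / (n : ℂ))) • ∑ k ∈ Finset.Icc 1 n, x k‖
      ≤ r * Real.sqrt ((n : ℝ) ^ 2
          - Real.sin (ω * m * n) ^ 2 / Real.sin (ω * m) ^ 2) := by
  set θ : ℝ := ω * m with hθdef
  clear_value θ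
  have hsin : Real.sin θ ≠ 0 := by
    intro h
    obtain ⟨l, hl⟩ := Real.sin_eq_zero_iff.mp h
    exact hωm l hl.symm
  have hn0 : (n:ℝ) ≠ 0 := by positivity
  have hnC : (n:ℂ) ≠ 0 := by exact_mod_cast Nat.cast_ne_zero.mpr (by omega)
  set α : ℕ → ℂ := fun k => Complex.exp (2 * (ω : ℂ) * Complex.I * (m : ℂ) * (k : ℂ)) with hα
  set S : ℂ := ∑ k ∈ Icc 1 n, α k with hSdef
  set s : ℝ := Real.sin (θ*n) / Real.sin θ with hsdef
  clear_value s
  -- S equals the closed form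
  have hS : S = (s:ℂ) * Complex.exp ((θ:ℂ)*((n:ℂ)+1)*Complex.I) := by
    rw [hSdef, hsdef, ← sum_exp θ hsin n]
    refine Finset.sum_congr rfl fun k _ => ?_
    simp only [hα, hθdef]
    congr 1
    push_cast; ring
  -- the scalar in the goal is S / n
  have harg : (ω : ℂ) * ((n : ℂ) + 1) * Complex.I * (m : ℂ) = (θ:ℂ)*((n:ℂ)+1)*Complex.I := by
    rw [hθdef]; push_cast; ring
  have hscal : ((s:ℝ):ℂ)
      * Complex.exp ((ω : ℂ) * ((n : ℂ) + 1) * Complex.I * (m : ℂ)) * (1 / (n : ℂ)) = S / n := by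
    rw [hS, harg]; ring
  rw [hscal]
  set c : ℂ := S / n with hcdef
  -- rewrite the vector
  have h0 : ∑ k ∈ Icc 1 n, (α k - c) = 0 := by
    rw [Finset.sum_sub_distrib, ← hSdef, Finset.sum_const, Nat.card_Icc]
    simp only [Nat.add_sub_cancel, nsmul_eq_mul, hcdef]
    field_simp
    ring
  have hvec : ∑ k ∈ Icc 1 n, α k • x k - c • ∑ k ∈ Icc 1 n, x k
      = ∑ k ∈ Icc 1 n, (α k - c) • (x k - a) := by
    have expand : ∀ k, (α k - c) • (x k - a) = (α k • x k - c • x k) - (α k - c) • a := by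
      intro k; rw [sub_smul, smul_sub, smul_sub, sub_smul]; abel
    rw [Finset.sum_congr rfl fun k _ => expand k, Finset.sum_sub_distrib,
      Finset.sum_sub_distrib, ← Finset.sum_smul, h0, zero_smul, sub_zero, ← Finset.smul_sum]
  rw [hvec]
  -- norms of α k are 1
  have hα1 : ∀ k : ℕ, Complex.normSq (α k) = 1 := by
    intro k
    simp only [hα]
    have : 2 * (ω : ℂ) * Complex.I * (m : ℂ) * (k : ℂ) = ((2*ω*m*k : ℝ):ℂ) * Complex.I := by
      push_cast; ring
    rw [this, ← Complex.sq_norm, Complex.norm_exp_ofReal_mul_I]; norm_num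
  -- sum of squares
  have hsq : ∑ k ∈ Icc 1 n, ‖α k - c‖^2 = n - Complex.normSq S / n := by
    have : ∀ k : ℕ, ‖α k - c‖^2
        = 1 + Complex.normSq c - 2 * (α k * (starRingEnd ℂ) c).re := by
      intro k
      rw [Complex.sq_norm, Complex.normSq_sub, hα1]
    rw [Finset.sum_congr rfl fun k _ => this k]
    rw [Finset.sum_sub_distrib, Finset.sum_add_distrib, Finset.sum_const, Finset.sum_const,
      Nat.card_Icc]
    have hre : ∑ k ∈ Icc 1 n, (α k * (starRingEnd ℂ) c).re = (S * (starRingEnd ℂ) c).re := by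
      rw [hSdef, Finset.sum_mul, Complex.re_sum]
    rw [← Finset.mul_sum, hre, hcdef]
    have hconj : (starRingEnd ℂ) (S / n) = (starRingEnd ℂ) S / n := by
      rw [map_div₀]; norm_num
    have h1 : (S * (starRingEnd ℂ) (S / n)).re = Complex.normSq S / n := by
      rw [hconj, mul_div_assoc']
      rw [Complex.mul_conj]
      rw [Complex.div_re]
      simp [Complex.normSq_natCast]
      field_simp
    have h2 : Complex.normSq (S / n) = Complex.normSq S / (n:ℝ)^2 := by
      rw [map_div₀]; simp [Complex.normSq_natCast]; ring
    rw [h1, h2]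
    simp only [Nat.add_sub_cancel, nsmul_eq_mul, mul_one]
    field_simp
    ring
  -- normSq S = s^2
  have hnsS : Complex.normSq S = s^2 := by
    rw [hS, map_mul]
    have : (θ:ℂ)*((n:ℂ)+1)*Complex.I = ((θ*(n+1) : ℝ):ℂ) * Complex.I := by push_cast; ring
    rw [this, ← Complex.sq_norm (Complex.exp _), Complex.norm_exp_ofReal_mul_I,
      Complex.normSq_ofReal]
    norm_num
    ring
  -- main estimate
  have hbound : ‖∑ k ∈ Icc 1 n, (α k - c) • (x k - a)‖ ≤ (∑ k ∈ Icc 1 n, ‖α k - c‖) * r := by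
    refine (norm_sum_le _ _).trans ?_
    rw [Finset.sum_mul]
    refine Finset.sum_le_sum fun k hk => ?_
    rw [norm_smul]
    exact mul_le_mul_of_nonneg_left (hx k hk) (norm_nonneg _)
  have hfnonneg : (0:ℝ) ≤ ∑ k ∈ Icc 1 n, ‖α k - c‖ :=
    Finset.sum_nonneg fun k _ => norm_nonneg _
  have hs2 : (0:ℝ) ≤ (n:ℝ)^2 - s^2 := by
    have := hsq
    have hnn : (0:ℝ) ≤ ∑ k ∈ Icc 1 n, ‖α k - c‖^2 :=
      Finset.sum_nonneg fun k _ => sq_nonneg _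
    rw [hsq] at hnn
    rw [hnsS] at hnn
    have hnpos : (0:ℝ) < n := by positivity
    have hdiv : s^2/(n:ℝ) * n = s^2 := div_mul_cancel₀ _ hn0
    nlinarith [mul_nonneg hnn hnpos.le, hdiv]
  have hCS : ∑ k ∈ Icc 1 n, ‖α k - c‖ ≤ Real.sqrt ((n:ℝ)^2 - s^2) := by
    rw [Real.le_sqrt hfnonneg hs2]
    calc (∑ k ∈ Icc 1 n, ‖α k - c‖)^2
        ≤ (Icc 1 n).card * ∑ k ∈ Icc 1 n, ‖α k - c‖^2 := sq_sum_le_card_mul_sum_sq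
      _ = (n:ℝ) * (n - Complex.normSq S / n) := by rw [hsq, Nat.card_Icc]; norm_num
      _ = (n:ℝ)^2 - s^2 := by rw [hnsS]; field_simp
  have hfinal : s^2 = Real.sin (θ * ↑n) ^ 2 / Real.sin θ ^ 2 := by
    rw [hsdef, div_pow]
  calc ‖∑ k ∈ Icc 1 n, (α k - c) • (x k - a)‖
      ≤ (∑ k ∈ Icc 1 n, ‖α k - c‖) * r := hbound
    _ ≤ Real.sqrt ((n:ℝ)^2 - s^2) * r := mul_le_mul_of_nonneg_right hCS hr
    _ = r * Real.sqrt ((n : ℝ) ^ 2 - Real.sin (θ * n) ^ 2 / Real.sin θ ^ 2) := by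
        rw [hfinal]; ring
end

section
/- Let H be an inner product space over ℂ, n ≥ 1, x₁,…,xₙ ∈ H, a ∈ H, r ≥ 0 with ‖xₖ − a‖ ≤ r for all k. Then ‖∑ₖ k·xₖ − ((n+1)/2)·∑ₖ xₖ‖ ≤ (rn/2)·((n−1)(n+1)/3)^{1/2}. -/
/-!
Centre the weights: since `∑ₖ (k - (n+1)/2) = 0`, the vector in question equals
`∑ₖ (k - (n+1)/2) • (xₖ - a)`, so its norm is at most `r ∑ₖ |k - (n+1)/2|`.
By Cauchy–Schwarz, `(∑ₖ |k - (n+1)/2|)² ≤ n ∑ₖ (k - (n+1)/2)² = n²(n² - 1)/12`.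
-/

open Finset

theorem norm_sum_smul_le_of_sum_eq_zero {ι 𝕜 E : Type*} [NormedField 𝕜] [SeminormedAddCommGroup E]
    [NormedSpace 𝕜 E] {s : Finset ι} {c : ι → 𝕜} (hc : ∑ i ∈ s, c i = 0) {x : ι → E} {a : E}
    {r : ℝ} (hx : ∀ i ∈ s, ‖x i - a‖ ≤ r) :
    ‖∑ i ∈ s, c i • x i‖ ≤ r * ∑ i ∈ s, ‖c i‖ := by
  have hcentre : ∑ i ∈ s, c i • x i = ∑ i ∈ s, c i • (x i - a) := by
    simp only [smul_sub, sum_sub_distrib, ← sum_smul, hc, zero_smul, sub_zero]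
  calc ‖∑ i ∈ s, c i • x i‖
      ≤ ∑ i ∈ s, ‖c i‖ * ‖x i - a‖ := hcentre ▸ norm_sum_le_of_le s fun i _ => norm_smul_le _ _
    _ ≤ ∑ i ∈ s, ‖c i‖ * r := sum_le_sum fun i hi => by gcongr; exact hx i hi
    _ = r * ∑ i ∈ s, ‖c i‖ := by rw [← sum_mul, mul_comm]

section Moments

variable {K : Type*} [Field K] [CharZero K]

theorem sum_Icc_natCast (n : ℕ) : ∑ k ∈ Icc 1 n, (k : K) = n * (n + 1) / 2 := by
  induction n with
  | zero => simp
  | succ m ih =>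
    rw [sum_Icc_succ_top (by omega), ih]
    push_cast; ring

theorem sum_Icc_natCast_sq (n : ℕ) :
    ∑ k ∈ Icc 1 n, (k : K) ^ 2 = n * (n + 1) * (2 * n + 1) / 6 := by
  induction n with
  | zero => simp
  | succ m ih =>
    rw [sum_Icc_succ_top (by omega), ih]
    push_cast; ring

theorem sum_Icc_natCast_sub_mean (n : ℕ) : ∑ k ∈ Icc 1 n, ((k : K) - (n + 1) / 2) = 0 := by
  rw [sum_sub_distrib, sum_const, Nat.card_Icc, sum_Icc_natCast, nsmul_eq_mul,
    Nat.add_sub_cancel]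
  ring

theorem sum_Icc_natCast_sub_mean_sq (n : ℕ) :
    ∑ k ∈ Icc 1 n, ((k : K) - (n + 1) / 2) ^ 2 = (n : K) * ((n - 1) * (n + 1)) / 12 := by
  simp only [sub_sq, sum_add_distrib, sum_sub_distrib, ← sum_mul, ← mul_sum, sum_const,
    Nat.card_Icc, Nat.add_sub_cancel, nsmul_eq_mul, sum_Icc_natCast, sum_Icc_natCast_sq]
  ring

end Moments

theorem sum_Icc_abs_natCast_sub_mean_le (n : ℕ) :
    ∑ k ∈ Icc 1 n, |(k : ℝ) - (n + 1) / 2| ≤ n / 2 * √((n - 1) * (n + 1) / 3) := by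
  have hCS : (∑ k ∈ Icc 1 n, |(k : ℝ) - (n + 1) / 2|) ^ 2
      ≤ n * ∑ k ∈ Icc 1 n, ((k : ℝ) - (n + 1) / 2) ^ 2 := by
    simpa only [Nat.card_Icc, Nat.add_sub_cancel, sq_abs] using
      sq_sum_le_card_mul_sum_sq (s := Icc 1 n) (f := fun k => |(k : ℝ) - (n + 1) / 2|)
  have hrhs : (n : ℝ) / 2 * √((n - 1) * (n + 1) / 3)
      = √(n * ∑ k ∈ Icc 1 n, ((k : ℝ) - (n + 1) / 2) ^ 2) := by
    rw [sum_Icc_natCast_sub_mean_sq, ← Real.sqrt_sq (by positivity : (0 : ℝ) ≤ n / 2),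
      ← Real.sqrt_mul (by positivity)]
    ring_nf
  rw [hrhs]
  exact Real.le_sqrt_of_sq_le hCS

theorem mellin_moment_one_approx_general {H : Type*} [NormedAddCommGroup H] [InnerProductSpace ℂ H]
    (n : ℕ) (x : ℕ → H) (a : H) (r : ℝ) (hr : 0 ≤ r)
    (hx : ∀ k ∈ Finset.Icc 1 n, ‖x k - a‖ ≤ r) :
    ‖∑ k ∈ Finset.Icc 1 n, (k : ℂ) • x k
        - ((((n : ℂ) + 1) / 2)) • ∑ k ∈ Finset.Icc 1 n, x k‖
      ≤ r * (n : ℝ) / 2 * Real.sqrt (((n : ℝ) - 1) * ((n : ℝ) + 1) / 3) := by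
  have hnorm (k : ℕ) : ‖(k : ℂ) - (n + 1) / 2‖ = |(k : ℝ) - (n + 1) / 2| := by
    rw [← Real.norm_eq_abs, ← Complex.norm_real]
    push_cast; rfl
  calc ‖∑ k ∈ Icc 1 n, (k : ℂ) • x k - ((n + 1) / 2 : ℂ) • ∑ k ∈ Icc 1 n, x k‖
      = ‖∑ k ∈ Icc 1 n, ((k : ℂ) - (n + 1) / 2) • x k‖ := by
        simp only [sub_smul, sum_sub_distrib, smul_sum]
    _ ≤ r * ∑ k ∈ Icc 1 n, |(k : ℝ) - (n + 1) / 2| := by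
        simpa only [hnorm] using norm_sum_smul_le_of_sum_eq_zero (sum_Icc_natCast_sub_mean (K := ℂ) n) hx
    _ ≤ r * (n / 2 * √((n - 1) * (n + 1) / 3)) := by
        gcongr; exact sum_Icc_abs_natCast_sub_mean_le n
    _ = r * n / 2 * √((n - 1) * (n + 1) / 3) := by ring

theorem mellin_moment_one_approx {H : Type*} [NormedAddCommGroup H] [InnerProductSpace ℂ H]
    (n : ℕ) (hn : 1 ≤ n) (x : ℕ → H) (a : H) (r : ℝ) (hr : 0 ≤ r)
    (hx : ∀ k ∈ Finset.Icc 1 n, ‖x k - a‖ ≤ r) :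
    ‖∑ k ∈ Finset.Icc 1 n, (k : ℂ) • x k
        - ((((n : ℂ) + 1) / 2)) • ∑ k ∈ Finset.Icc 1 n, x k‖
      ≤ r * (n : ℝ) / 2 * Real.sqrt (((n : ℝ) - 1) * ((n : ℝ) + 1) / 3) :=
  mellin_moment_one_approx_general n x a r hr hx
end

section
/- For real numbers m, n, p, q with n ≤ m and q ≤ p (and m, n, p, q ≥ 0), (m² − n²)(p² − q²) ≤ (mp − nq)². Consequently, if H is an inner product space, p a probability vector, xᵢ, yᵢ ∈ H, a, b ∈ H, r, s ≥ 0 with ‖xᵢ − a‖ ≤ r and ‖yᵢ − b‖ ≤ s for all i, then |∑ᵢ pᵢ⟨xᵢ,yᵢ⟩ − ⟨∑ᵢ pᵢxᵢ, ∑ᵢ pᵢyᵢ⟩| ≤ rs − ‖∑ᵢ pᵢ(xᵢ − a)‖·‖∑ᵢ pᵢ(yᵢ − b)‖. -/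
open scoped InnerProductSpace
open Finset

/-!
Translating `x` and `y` by constants does not change the Grüss functional, and translating by
the weighted means `X = ∑ pᵢxᵢ`, `Y = ∑ pᵢyᵢ` exhibits it as the covariance `∑ pᵢ⟪xᵢ - X, yᵢ - Y⟫`.
Cauchy–Schwarz bounds its square by the product of the two variances, and after translating by
`a` (resp. `b`) each variance is at most `r² - ‖∑ pᵢ(xᵢ - a)‖²` (resp. `s² - ‖∑ pᵢ(yᵢ - b)‖²`).
The elementary inequality bounds that product by `(rs - ‖∑ pᵢ(xᵢ - a)‖ ‖∑ pᵢ(yᵢ - b)‖)²`.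
-/

theorem sq_sub_sq_mul_sq_sub_sq_le {R : Type*} [CommRing R] [LinearOrder R]
    [IsStrictOrderedRing R] (m n p q : R) :
    (m ^ 2 - n ^ 2) * (p ^ 2 - q ^ 2) ≤ (m * p - n * q) ^ 2 :=
  calc (m ^ 2 - n ^ 2) * (p ^ 2 - q ^ 2) = (m * p - n * q) ^ 2 - (m * q - n * p) ^ 2 := by ring
    _ ≤ (m * p - n * q) ^ 2 := sub_le_self _ (sq_nonneg _)

section Gruss

variable {ι : Type*} [Fintype ι] (𝕜 : Type*) [RCLike 𝕜]
  {E : Type*} [NormedAddCommGroup E] [InnerProductSpace 𝕜 E]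

noncomputable def grussFunctional (p : ι → ℝ) (x y : ι → E) : 𝕜 :=
  ∑ i, (p i : 𝕜) * ⟪x i, y i⟫_𝕜 - ⟪∑ i, (p i : 𝕜) • x i, ∑ i, (p i : 𝕜) • y i⟫_𝕜

variable {𝕜} {p : ι → ℝ}

theorem sum_ofReal_smul_sub_const (hsum : ∑ i, p i = 1) (x : ι → E) (a : E) :
    ∑ i, (p i : 𝕜) • (x i - a) = ∑ i, (p i : 𝕜) • x i - a := by
  simp only [smul_sub, sum_sub_distrib, ← sum_smul, ← RCLike.ofReal_sum, hsum,
    RCLike.ofReal_one, one_smul]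

theorem sum_ofReal_mul_inner_left (p : ι → ℝ) (x : ι → E) (w : E) :
    ∑ i, (p i : 𝕜) * ⟪x i, w⟫_𝕜 = ⟪∑ i, (p i : 𝕜) • x i, w⟫_𝕜 := by
  simp only [sum_inner, inner_smul_left, RCLike.conj_ofReal]

theorem sum_ofReal_mul_inner_right (p : ι → ℝ) (x : ι → E) (w : E) :
    ∑ i, (p i : 𝕜) * ⟪w, x i⟫_𝕜 = ⟪w, ∑ i, (p i : 𝕜) • x i⟫_𝕜 := by
  simp only [inner_sum, inner_smul_right]

theorem grussFunctional_sub_const (hsum : ∑ i, p i = 1) (x y : ι → E) (a b : E) :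
    grussFunctional 𝕜 p (fun i ↦ x i - a) (fun i ↦ y i - b) = grussFunctional 𝕜 p x y := by
  have hmean : ∑ i, (p i : 𝕜) * ⟪a, b⟫_𝕜 = ⟪a, b⟫_𝕜 := by
    rw [← sum_mul, ← RCLike.ofReal_sum, hsum, RCLike.ofReal_one, one_mul]
  simp only [grussFunctional, sum_ofReal_smul_sub_const hsum, inner_sub_left, inner_sub_right,
    mul_sub, sum_sub_distrib, sum_ofReal_mul_inner_left, sum_ofReal_mul_inner_right, hmean]
  ring

theorem grussFunctional_eq_sum_inner_sub_mean (hsum : ∑ i, p i = 1) (x y : ι → E) :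
    grussFunctional 𝕜 p x y = ∑ i, (p i : 𝕜) *
      ⟪x i - ∑ j, (p j : 𝕜) • x j, y i - ∑ j, (p j : 𝕜) • y j⟫_𝕜 := by
  rw [← grussFunctional_sub_const hsum x y (∑ j, (p j : 𝕜) • x j) (∑ j, (p j : 𝕜) • y j),
    grussFunctional, sum_ofReal_smul_sub_const hsum, sub_self, inner_zero_left, sub_zero]

theorem norm_sum_ofReal_mul_inner_sq_le (hp : ∀ i, 0 ≤ p i) (u v : ι → E) :
    ‖∑ i, (p i : 𝕜) * ⟪u i, v i⟫_𝕜‖ ^ 2 ≤ (∑ i, p i * ‖u i‖ ^ 2) * ∑ i, p i * ‖v i‖ ^ 2 := by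
  refine (pow_le_pow_left₀ (norm_nonneg _) (norm_sum_le _ _) 2).trans
    (sum_sq_le_sum_mul_sum_of_sq_le_mul _ (fun i _ ↦ mul_nonneg (hp i) (sq_nonneg _))
      (fun i _ ↦ mul_nonneg (hp i) (sq_nonneg _)) fun i _ ↦ ?_)
  rw [norm_mul, RCLike.norm_ofReal, abs_of_nonneg (hp i)]
  calc (p i * ‖⟪u i, v i⟫_𝕜‖) ^ 2 ≤ (p i * (‖u i‖ * ‖v i‖)) ^ 2 :=
        pow_le_pow_left₀ (mul_nonneg (hp i) (norm_nonneg _))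
          (mul_le_mul_of_nonneg_left (norm_inner_le_norm _ _) (hp i)) 2
    _ = p i * ‖u i‖ ^ 2 * (p i * ‖v i‖ ^ 2) := by ring

theorem norm_grussFunctional_sq_le (hp : ∀ i, 0 ≤ p i) (hsum : ∑ i, p i = 1) (x y : ι → E) :
    ‖grussFunctional 𝕜 p x y‖ ^ 2 ≤ (∑ i, p i * ‖x i - ∑ j, (p j : 𝕜) • x j‖ ^ 2) *
      ∑ i, p i * ‖y i - ∑ j, (p j : 𝕜) • y j‖ ^ 2 := by
  rw [grussFunctional_eq_sum_inner_sub_mean hsum]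
  exact norm_sum_ofReal_mul_inner_sq_le hp _ _

theorem sum_mul_norm_sub_mean_sq (hsum : ∑ i, p i = 1) (x : ι → E) :
    ∑ i, p i * ‖x i - ∑ j, (p j : 𝕜) • x j‖ ^ 2
      = ∑ i, p i * ‖x i‖ ^ 2 - ‖∑ j, (p j : 𝕜) • x j‖ ^ 2 := by
  have h := grussFunctional_eq_sum_inner_sub_mean (𝕜 := 𝕜) hsum x x
  simp only [grussFunctional, inner_self_eq_norm_sq_to_K] at h
  exact_mod_cast h.symm

theorem sum_mul_norm_sub_mean_sq_le (hp : ∀ i, 0 ≤ p i) (hsum : ∑ i, p i = 1) {x : ι → E}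
    {r : ℝ} (hx : ∀ i, ‖x i‖ ≤ r) :
    ∑ i, p i * ‖x i - ∑ j, (p j : 𝕜) • x j‖ ^ 2 ≤ r ^ 2 - ‖∑ j, (p j : 𝕜) • x j‖ ^ 2 := by
  rw [sum_mul_norm_sub_mean_sq hsum]
  gcongr
  calc ∑ i, p i * ‖x i‖ ^ 2 ≤ ∑ i, p i * r ^ 2 :=
        sum_le_sum fun i _ ↦
          mul_le_mul_of_nonneg_left (pow_le_pow_left₀ (norm_nonneg _) (hx i) 2) (hp i)
    _ = r ^ 2 := by rw [← sum_mul, hsum, one_mul]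

theorem norm_grussFunctional_le (hp : ∀ i, 0 ≤ p i) (hsum : ∑ i, p i = 1) {x y : ι → E}
    {a b : E} {r s : ℝ} (hr : 0 ≤ r) (hs : 0 ≤ s) (hx : ∀ i, ‖x i - a‖ ≤ r)
    (hy : ∀ i, ‖y i - b‖ ≤ s) :
    ‖grussFunctional 𝕜 p x y‖
      ≤ r * s - ‖∑ i, (p i : 𝕜) • (x i - a)‖ * ‖∑ i, (p i : 𝕜) • (y i - b)‖ := by
  rw [← grussFunctional_sub_const hsum x y a b]
  set U := ∑ i, (p i : 𝕜) • (x i - a)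
  set V := ∑ i, (p i : 𝕜) • (y i - b)
  have hvarX := sum_mul_norm_sub_mean_sq_le (𝕜 := 𝕜) hp hsum hx
  have hvarY := sum_mul_norm_sub_mean_sq_le (𝕜 := 𝕜) hp hsum hy
  have hvarX_nonneg : 0 ≤ ∑ i, p i * ‖x i - a - U‖ ^ 2 :=
    sum_nonneg fun i _ ↦ mul_nonneg (hp i) (sq_nonneg _)
  have hvarY_nonneg : 0 ≤ ∑ i, p i * ‖y i - b - V‖ ^ 2 :=
    sum_nonneg fun i _ ↦ mul_nonneg (hp i) (sq_nonneg _)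
  have hUr : ‖U‖ ≤ r := (pow_le_pow_iff_left₀ (norm_nonneg _) hr two_ne_zero).1 (by linarith)
  have hVs : ‖V‖ ≤ s := (pow_le_pow_iff_left₀ (norm_nonneg _) hs two_ne_zero).1 (by linarith)
  have hsq : ‖grussFunctional 𝕜 p (fun i ↦ x i - a) (fun i ↦ y i - b)‖ ^ 2
      ≤ (r * s - ‖U‖ * ‖V‖) ^ 2 :=
    calc _ ≤ (∑ i, p i * ‖x i - a - U‖ ^ 2) * ∑ i, p i * ‖y i - b - V‖ ^ 2 :=
          norm_grussFunctional_sq_le hp hsum _ _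
      _ ≤ (r ^ 2 - ‖U‖ ^ 2) * (s ^ 2 - ‖V‖ ^ 2) :=
          mul_le_mul hvarX hvarY hvarY_nonneg (hvarX_nonneg.trans hvarX)
      _ ≤ (r * s - ‖U‖ * ‖V‖) ^ 2 := sq_sub_sq_mul_sq_sub_sq_le _ _ _ _
  exact (pow_le_pow_iff_left₀ (norm_nonneg _)
    (sub_nonneg.2 (mul_le_mul hUr hVs (norm_nonneg _) hr)) two_ne_zero).1 hsq

end Gruss

theorem refined_gruss_general {H : Type*} [NormedAddCommGroup H] [InnerProductSpace ℂ H]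
    (N : ℕ) (x y : Fin N → H) (p : Fin N → ℝ)
    (hp : ∀ i, 0 ≤ p i) (hsum : ∑ i, p i = 1) (a b : H) (r s : ℝ)
    (hr : 0 ≤ r) (hs : 0 ≤ s)
    (hx : ∀ i, ‖x i - a‖ ≤ r) (hy : ∀ i, ‖y i - b‖ ≤ s) :
    (∀ m n p' q : ℝ, 0 ≤ n → 0 ≤ q → n ≤ m → q ≤ p' →
        (m ^ 2 - n ^ 2) * (p' ^ 2 - q ^ 2) ≤ (m * p' - n * q) ^ 2) ∧
    ‖(∑ i, (p i : ℂ) * ⟪x i, y i⟫_ℂ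
        - ⟪∑ i, (p i : ℂ) • x i, ∑ i, (p i : ℂ) • y i⟫_ℂ)‖
      ≤ r * s - ‖∑ i, (p i : ℂ) • (x i - a)‖ * ‖∑ i, (p i : ℂ) • (y i - b)‖ :=
  ⟨fun m n p' q _ _ _ _ ↦ sq_sub_sq_mul_sq_sub_sq_le m n p' q,
    norm_grussFunctional_le hp hsum hr hs hx hy⟩

theorem refined_gruss {H : Type*} [NormedAddCommGroup H] [InnerProductSpace ℂ H]
    (N : ℕ) (hN : 1 ≤ N) (x y : Fin N → H) (p : Fin N → ℝ)
    (hp : ∀ i, 0 ≤ p i) (hsum : ∑ i, p i = 1) (a b : H) (r s : ℝ)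
    (hr : 0 ≤ r) (hs : 0 ≤ s)
    (hx : ∀ i, ‖x i - a‖ ≤ r) (hy : ∀ i, ‖y i - b‖ ≤ s) :
    (∀ m n p' q : ℝ, 0 ≤ n → 0 ≤ q → n ≤ m → q ≤ p' →
        (m ^ 2 - n ^ 2) * (p' ^ 2 - q ^ 2) ≤ (m * p' - n * q) ^ 2) ∧
    ‖(∑ i, (p i : ℂ) * ⟪x i, y i⟫_ℂ
        - ⟪∑ i, (p i : ℂ) • x i, ∑ i, (p i : ℂ) • y i⟫_ℂ)‖
      ≤ r * s - ‖∑ i, (p i : ℂ) • (x i - a)‖ * ‖∑ i, (p i : ℂ) • (y i - b)‖ :=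
  refined_gruss_general N x y p hp hsum a b r s hr hs hx hy
end
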